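/- The FRSD iterates satisfy, for every k ≥ 1, ‖x(k+1) − x(k)‖_R ≤ (σ_R + α(1+v)κ₃ ṽ L) ‖x(k) − x(k−1)‖_R + α (β κ₁ |||I_{np} − R|||_R + κ₃ nL) ‖x(k) − x̂(k)‖_C + α κ₃ nL ‖x̂(k) − x*_vec‖ + α κ₃² (3v + 2) ṽ² √n σ_R^{k−1} ‖∇f(x(k))‖. -/

import Mathlib

open Matrix Filter
open scoped Kronecker

noncomputable section

/-- Euclidean norm on `ι → ℝ`. -/
def eucNorm {ι : Type*} [Fintype ι] (z : ι → ℝ) : ℝ := Real.sqrt (∑ i, z i ^ 2)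

/-- Spectral norm (operator 2-norm) of a square real matrix. -/
def specNorm {ι : Type*} [Fintype ι] (A : Matrix ι ι ℝ) : ℝ :=
  sSup {c : ℝ | ∃ z : ι → ℝ, eucNorm z ≤ 1 ∧ c = eucNorm (A.mulVec z)}

/-- Matrix norm induced by a vector norm `N`: `sup_{z ≠ 0} N (A z) / N z`. -/
def opNorm {ι : Type*} [Fintype ι] (N : (ι → ℝ) → ℝ) (A : Matrix ι ι ℝ) : ℝ :=
  sSup {c : ℝ | ∃ z : ι → ℝ, z ≠ 0 ∧ c = N (A.mulVec z) / N z}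

/-- `g` is the gradient of `f : ℝ^p → ℝ`. -/
def IsGradient {p : ℕ} (f : (Fin p → ℝ) → ℝ) (g : (Fin p → ℝ) → Fin p → ℝ) : Prop :=
  ∀ x, HasFDerivAt f (∑ j, g x j • (ContinuousLinearMap.proj j : (Fin p → ℝ) →L[ℝ] ℝ)) x

/-- `R = R̄ ⊗ I_p`. -/
def RK (n p : ℕ) (Rb : Matrix (Fin n) (Fin n) ℝ) :
    Matrix (Fin n × Fin p) (Fin n × Fin p) ℝ :=
  Rb ⊗ₖ (1 : Matrix (Fin p) (Fin p) ℝ)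

/-- `V_∞ = (1_n π^T) ⊗ I_p`. -/
def VinfK (n p : ℕ) (π : Fin n → ℝ) :
    Matrix (Fin n × Fin p) (Fin n × Fin p) ℝ :=
  (Matrix.of (fun _ j => π j) : Matrix (Fin n) (Fin n) ℝ) ⊗ₖ (1 : Matrix (Fin p) (Fin p) ℝ)

/-- `V(k) = R̄^k ⊗ I_p`. -/
def VK (n p : ℕ) (Rb : Matrix (Fin n) (Fin n) ℝ) (k : ℕ) :
    Matrix (Fin n × Fin p) (Fin n × Fin p) ℝ :=
  (Rb ^ k) ⊗ₖ (1 : Matrix (Fin p) (Fin p) ℝ)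

/-- `Ṽ(k)⁻¹ = diag(((R̄^k)_{11})⁻¹, …, ((R̄^k)_{nn})⁻¹) ⊗ I_p`. -/
def VtinvK (n p : ℕ) (Rb : Matrix (Fin n) (Fin n) ℝ) (k : ℕ) :
    Matrix (Fin n × Fin p) (Fin n × Fin p) ℝ :=
  Matrix.diagonal (fun q => ((Rb ^ k) q.1 q.1)⁻¹)

/-- `∇f(z) = (∇f_1(z_1), …, ∇f_n(z_n))` block-wise. -/
def gradf {n p : ℕ} (g : Fin n → (Fin p → ℝ) → Fin p → ℝ) (z : Fin n × Fin p → ℝ) :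
    Fin n × Fin p → ℝ :=
  fun q => g q.1 (fun j => z (q.1, j)) q.2

/-- `x*_vec = 1_n ⊗ x*`. -/
def starVec (n p : ℕ) (xstar : Fin p → ℝ) : Fin n × Fin p → ℝ := fun q => xstar q.2

end


/-!
Subtracting consecutive FRSD updates and using `V∞ R = V∞`, `R V∞ = V∞` and `V∞ y(k) = 0`
splits `x(k+1) - x(k)` into six terms: the contraction `(R - V∞)(x(k) - x(k-1))`, the dual
correction `αβ (I - R)(x(k) - x̂(k))`, the gradient increment seen through
`(I - V∞) Ṽ(k-1)⁻¹`, the drift `Ṽ(k)⁻¹ - Ṽ(k-1)⁻¹`, the gap `V∞ (Ṽ(k-1)⁻¹ - diag(π)⁻¹)`, and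
`V∞ diag(π)⁻¹ ∇f(x(k)) = 1 ⊗ Σᵢ ∇fᵢ(xᵢ(k))`, which is controlled by `‖x(k) - x*_vec‖`
because `Σᵢ ∇fᵢ(x*) = 0`. Since `R^k - V∞ = (R - V∞)^k`, the diagonal of `R̄^k` converges to
`π` at rate `κ₃ σ_R^k`; this bounds both weight terms by multiples of `κ₃ ṽ² σ_R^(k-1)`, and
it makes `V∞` and `diag(π)⁻¹` the limits of `V(k)` and `Ṽ(k)⁻¹`, so that `‖V∞‖ ≤ v` and
`π_i⁻¹ ≤ ṽ`.
-/

open scoped Matrix.Norms.L2Operator Topology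

noncomputable def DinvK (n p : ℕ) (π : Fin n → ℝ) : Matrix (Fin n × Fin p) (Fin n × Fin p) ℝ :=
  Matrix.diagonal fun q => (π q.1)⁻¹

section EuclideanNorm

variable {ι : Type*} [Fintype ι]

lemma eucNorm_eq_norm (z : ι → ℝ) : eucNorm z = ‖WithLp.toLp 2 z‖ := by
  simp [eucNorm, EuclideanSpace.norm_eq]

lemma eucNorm_nonneg (z : ι → ℝ) : 0 ≤ eucNorm z := Real.sqrt_nonneg _

lemma eucNorm_add_le (z w : ι → ℝ) : eucNorm (z + w) ≤ eucNorm z + eucNorm w := by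
  simpa only [eucNorm_eq_norm, WithLp.toLp_add] using norm_add_le _ _

lemma eucNorm_sum_le {κ : Type*} (s : Finset κ) (F : κ → ι → ℝ) :
    eucNorm (∑ i ∈ s, F i) ≤ ∑ i ∈ s, eucNorm (F i) := by
  simpa only [eucNorm_eq_norm, WithLp.toLp_sum] using norm_sum_le _ _

lemma eucNorm_pos {z : ι → ℝ} (hz : z ≠ 0) : 0 < eucNorm z := by
  rw [eucNorm_eq_norm, norm_pos_iff]
  exact fun h => hz (by simpa using congrArg WithLp.ofLp h)

lemma eucNorm_single [DecidableEq ι] (q : ι) : eucNorm (Pi.single q (1 : ℝ)) = 1 := by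
  simp [eucNorm_eq_norm]

lemma abs_apply_le_eucNorm (z : ι → ℝ) (q : ι) : |z q| ≤ eucNorm z := by
  simpa [eucNorm_eq_norm] using PiLp.norm_apply_le (WithLp.toLp 2 z) q

lemma eucNorm_comp_snd {κ : Type*} [Fintype κ] (s : κ → ℝ) :
    eucNorm (fun q : ι × κ => s q.2) = Real.sqrt (Fintype.card ι) * eucNorm s := by
  rw [eucNorm, eucNorm, ← Real.sqrt_mul (Nat.cast_nonneg _), Fintype.sum_prod_type]
  simp

lemma sum_le_sqrt_card_mul_eucNorm (a : ι → ℝ) :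
    ∑ i, a i ≤ Real.sqrt (Fintype.card ι) * eucNorm a := by
  rw [eucNorm, ← Real.sqrt_mul (Nat.cast_nonneg _)]
  refine Real.le_sqrt_of_sq_le ?_
  simpa using Finset.sum_mul_sq_le_sq_mul_sq Finset.univ (fun _ => (1 : ℝ)) a

lemma eucNorm_smul (a : ℝ) (z : ι → ℝ) : eucNorm (a • z) = |a| * eucNorm z := by
  simp only [eucNorm_eq_norm, WithLp.toLp_smul, norm_smul, Real.norm_eq_abs]

lemma eucNorm_mono {a b : ι → ℝ} (h : ∀ i, |a i| ≤ |b i|) :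
    eucNorm a ≤ eucNorm b :=
  Real.sqrt_le_sqrt (Finset.sum_le_sum fun i _ => sq_le_sq.2 (h i))

lemma eucNorm_blocks {κ : Type*} [Fintype κ] (z : ι × κ → ℝ) :
    eucNorm (fun i => eucNorm fun j => z (i, j)) = eucNorm z := by
  simp only [eucNorm, Real.sq_sqrt (Finset.sum_nonneg fun _ _ => sq_nonneg _),
    Fintype.sum_prod_type]

variable [DecidableEq ι]

lemma eucNorm_mulVec_le (A : Matrix ι ι ℝ) (z : ι → ℝ) :
    eucNorm (A *ᵥ z) ≤ ‖A‖ * eucNorm z := by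
  simpa only [eucNorm_eq_norm, Matrix.toEuclideanCLM_toLp, Matrix.cstar_norm_def] using
    (Matrix.toEuclideanCLM (𝕜 := ℝ) A).le_opNorm (WithLp.toLp 2 z)

lemma l2_opNorm_le_of_eucNorm_mulVec_le {A : Matrix ι ι ℝ} {C : ℝ} (hC : 0 ≤ C)
    (h : ∀ z, eucNorm (A *ᵥ z) ≤ C * eucNorm z) : ‖A‖ ≤ C := by
  rw [Matrix.cstar_norm_def]
  refine ContinuousLinearMap.opNorm_le_bound _ hC fun z => ?_
  simpa only [eucNorm_eq_norm, WithLp.toLp_ofLp, ← Matrix.toEuclideanCLM_toLp] using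
    h (WithLp.ofLp z)

lemma abs_apply_le_l2_opNorm (A : Matrix ι ι ℝ) (q q' : ι) : |A q q'| ≤ ‖A‖ := by
  simpa [eucNorm_single, Matrix.mulVec_single] using
    (abs_apply_le_eucNorm _ q).trans (eucNorm_mulVec_le A (Pi.single q' 1))

lemma specNorm_eq_l2_opNorm (A : Matrix ι ι ℝ) : specNorm A = ‖A‖ := by
  rw [Matrix.cstar_norm_def, ← ContinuousLinearMap.sSup_unitClosedBall_eq_norm, specNorm]
  congr 1
  ext c
  simp only [Set.mem_ofPred_eq, Set.mem_image, Metric.mem_closedBall, dist_zero_right]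
  constructor
  · rintro ⟨z, hz, rfl⟩
    exact ⟨WithLp.toLp 2 z, by rwa [← eucNorm_eq_norm], by
      rw [Matrix.toEuclideanCLM_toLp, eucNorm_eq_norm]⟩
  · rintro ⟨z, hz, rfl⟩
    exact ⟨WithLp.ofLp z, by rwa [eucNorm_eq_norm], by rw [eucNorm_eq_norm]; rfl⟩

lemma l2_opNorm_one_le : ‖(1 : Matrix ι ι ℝ)‖ ≤ 1 :=
  l2_opNorm_le_of_eucNorm_mulVec_le zero_le_one (by simp)

lemma l2_opNorm_le_iSup_of_tendsto {A : ℕ → Matrix ι ι ℝ} {B : Matrix ι ι ℝ}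
    (h : Tendsto A atTop (𝓝 B)) : ‖B‖ ≤ ⨆ m, ‖A m‖ :=
  le_of_tendsto' h.norm fun m => le_ciSup h.norm.bddAbove_range m

end EuclideanNorm

lemma Seminorm.map_sub₆_le_add {E : Type*} [AddCommGroup E] [Module ℝ E] (N : Seminorm ℝ E)
    (a b c d e f : E) : N (a - b - c - d - e - f) ≤ N a + N b + N c + N d + N e + N f := by
  linarith [map_sub_le_add N (a - b - c - d - e) f, map_sub_le_add N (a - b - c - d) e,
    map_sub_le_add N (a - b - c) d, map_sub_le_add N (a - b) c, map_sub_le_add N a b]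

section InducedOpNorm

variable {ι : Type*} [Fintype ι] (N : Seminorm ℝ (ι → ℝ)) {κ : ℝ}

lemma one_le_of_eucNorm_le_seminorm_le [DecidableEq ι] [Nonempty ι] (hge : ∀ z, eucNorm z ≤ N z)
    (hκ : ∀ z, N z ≤ κ * eucNorm z) : 1 ≤ κ := by
  obtain ⟨q⟩ := ‹Nonempty ι›
  have h := (hge (Pi.single q 1)).trans (hκ (Pi.single q 1))
  rwa [eucNorm_single, mul_one] at h

lemma opNorm_nonneg (A : Matrix ι ι ℝ) : 0 ≤ opNorm N A :=
  Real.sSup_nonneg (by rintro _ ⟨z, -, rfl⟩; exact div_nonneg (apply_nonneg _ _) (apply_nonneg _ _))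

lemma apply_mulVec_le_opNorm_mul [DecidableEq ι] (hge : ∀ z, eucNorm z ≤ N z)
    (hκ : ∀ z, N z ≤ κ * eucNorm z) (A : Matrix ι ι ℝ) (z : ι → ℝ) :
    N (A *ᵥ z) ≤ opNorm N A * N z := by
  rcases eq_or_ne z 0 with rfl | hz
  · simp
  have hNz : 0 < N z := (eucNorm_pos hz).trans_le (hge z)
  have hbdd : BddAbove {c : ℝ | ∃ w : ι → ℝ, w ≠ 0 ∧ c = N (A *ᵥ w) / N w} := by
    refine ⟨κ * ‖A‖, ?_⟩
    rintro _ ⟨w, hw, rfl⟩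
    have hNw : 0 < N w := (eucNorm_pos hw).trans_le (hge w)
    have hκ0 : 0 ≤ κ := nonneg_of_mul_nonneg_left ((hNw.trans_le (hκ w)).le) (eucNorm_pos hw)
    rw [div_le_iff₀ hNw]
    calc N (A *ᵥ w) ≤ κ * eucNorm (A *ᵥ w) := hκ _
      _ ≤ κ * (‖A‖ * N w) := by gcongr; exact (eucNorm_mulVec_le A w).trans (by gcongr; exact hge w)
      _ = κ * ‖A‖ * N w := by ring
  rw [← div_le_iff₀ hNz]
  exact le_csSup hbdd ⟨z, hz, rfl⟩

lemma apply_pow_mulVec_le [DecidableEq ι] (hge : ∀ z, eucNorm z ≤ N z)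
    (hκ : ∀ z, N z ≤ κ * eucNorm z) (A : Matrix ι ι ℝ) (m : ℕ) (z : ι → ℝ) :
    N ((A ^ m) *ᵥ z) ≤ opNorm N A ^ m * N z := by
  induction m generalizing z with
  | zero => simp
  | succ m ih =>
    rw [pow_succ, ← Matrix.mulVec_mulVec, pow_succ, mul_assoc]
    exact (ih _).trans
      (mul_le_mul_of_nonneg_left (apply_mulVec_le_opNorm_mul N hge hκ A z)
        (pow_nonneg (opNorm_nonneg N A) m))

lemma apply_smul_le_mul_eucNorm (hκ : ∀ z, N z ≤ κ * eucNorm z) {a : ℝ} (ha : 0 ≤ a)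
    (w : ι → ℝ) : N (a • w) ≤ a * κ * eucNorm w := by
  rw [map_smul_eq_mul, Real.norm_of_nonneg ha, mul_assoc]
  exact mul_le_mul_of_nonneg_left (hκ w) ha

lemma apply_smul_mulVec_le [DecidableEq ι] (hκ : ∀ z, N z ≤ κ * eucNorm z) (hκ0 : 0 ≤ κ) {a c d : ℝ}
    (ha : 0 ≤ a) {A : Matrix ι ι ℝ} (hA : ‖A‖ ≤ c) {z : ι → ℝ} (hz : eucNorm z ≤ d) :
    N (a • (A *ᵥ z)) ≤ a * κ * c * d := by
  refine (apply_smul_le_mul_eucNorm N hκ ha _).trans ?_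
  rw [mul_assoc _ c]
  gcongr
  exact (eucNorm_mulVec_le A z).trans
    (mul_le_mul hA hz (eucNorm_nonneg z) ((norm_nonneg A).trans hA))

end InducedOpNorm

section Consensus

lemma sub_pow_succ_of_mul_eq {α : Type*} [Ring α] {a e : α} (hae : a * e = e) (hea : e * a = e)
    (hee : e * e = e) (m : ℕ) : (a - e) ^ (m + 1) = a ^ (m + 1) - e := by
  have hpow : ∀ k : ℕ, a ^ k * e = e := fun k => by
    induction k with
    | zero => simp
    | succ k ih => rw [pow_succ, mul_assoc, hae, ih]
  induction m with
  | zero => simp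
  | succ m ih => rw [pow_succ, ih, sub_mul, mul_sub, mul_sub, ← pow_succ, hpow, hea, hee]; abel

variable {ι : Type*} [Fintype ι] {M : Matrix ι ι ℝ}

lemma pow_apply_self_pos [DecidableEq ι] (hM : M ∈ Matrix.rowStochastic ℝ ι)
    (hdiag : ∀ i, 0 < M i i) (m : ℕ) (i : ι) : 0 < (M ^ m) i i := by
  induction m with
  | zero => simp
  | succ m ih =>
    rw [pow_succ, Matrix.mul_apply]
    refine (mul_pos ih (hdiag i)).trans_le ?_
    exact Finset.single_le_sum (f := fun l => (M ^ m) i l * M l i)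
      (fun l _ => mul_nonneg (Matrix.nonneg_of_mem_rowStochastic (pow_mem hM m))
        (Matrix.nonneg_of_mem_rowStochastic hM)) (Finset.mem_univ i)

variable {π : ι → ℝ}

lemma mul_of_const_row [DecidableEq ι] (hM : M ∈ Matrix.rowStochastic ℝ ι) :
    M * Matrix.of (fun _ j => π j) = Matrix.of (fun _ j => π j) := by
  ext i j
  simp [Matrix.mul_apply, ← Finset.sum_mul, Matrix.sum_row_of_mem_rowStochastic hM]

lemma of_const_row_mul (hπstat : Matrix.vecMul π M = π) :
    (Matrix.of (fun _ j => π j) : Matrix ι ι ℝ) * M = Matrix.of (fun _ j => π j) := by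
  ext i j
  simpa [Matrix.mul_apply, Matrix.vecMul, dotProduct] using congrFun hπstat j

lemma of_const_row_mul_self (hπsum : ∑ i, π i = 1) :
    (Matrix.of (fun _ j => π j) : Matrix ι ι ℝ) * Matrix.of (fun _ j => π j) =
      Matrix.of (fun _ j => π j) := by
  ext i j
  simp [Matrix.mul_apply, ← Finset.sum_mul, hπsum]

end Consensus

section Kronecker

variable {n p : ℕ} {Rb : Matrix (Fin n) (Fin n) ℝ} {π : Fin n → ℝ}

lemma RK_pow (m : ℕ) : RK n p Rb ^ m = VK n p Rb m := by
  induction m with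
  | zero => simp [VK]
  | succ m ih => rw [pow_succ, ih, VK, VK, RK, ← Matrix.mul_kronecker_mul, pow_succ, mul_one]

lemma RK_mul_VinfK (hRb : Rb ∈ Matrix.rowStochastic ℝ (Fin n)) :
    RK n p Rb * VinfK n p π = VinfK n p π := by
  rw [RK, VinfK, ← Matrix.mul_kronecker_mul, mul_of_const_row hRb, mul_one]

lemma VinfK_mul_RK (hπstat : Matrix.vecMul π Rb = π) :
    VinfK n p π * RK n p Rb = VinfK n p π := by
  rw [RK, VinfK, ← Matrix.mul_kronecker_mul, of_const_row_mul hπstat, mul_one]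

lemma VinfK_mul_VinfK (hπsum : ∑ i, π i = 1) : VinfK n p π * VinfK n p π = VinfK n p π := by
  rw [VinfK, ← Matrix.mul_kronecker_mul, of_const_row_mul_self hπsum, mul_one]

lemma RK_sub_VinfK_pow (hRb : Rb ∈ Matrix.rowStochastic ℝ (Fin n))
    (hπstat : Matrix.vecMul π Rb = π) (hπsum : ∑ i, π i = 1) {m : ℕ} (hm : 1 ≤ m) :
    (RK n p Rb - VinfK n p π) ^ m = VK n p Rb m - VinfK n p π := by
  obtain ⟨m, rfl⟩ := Nat.exists_eq_add_of_le' hm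
  rw [sub_pow_succ_of_mul_eq (RK_mul_VinfK hRb) (VinfK_mul_RK hπstat) (VinfK_mul_VinfK hπsum),
    RK_pow]

lemma VK_sub_VinfK_apply_self (m : ℕ) (i : Fin n) (j : Fin p) :
    (VK n p Rb m - VinfK n p π) (i, j) (i, j) = (Rb ^ m) i i - π i := by
  simp [VK, VinfK]

end Kronecker

section Convergence

variable {n p : ℕ} {Rb : Matrix (Fin n) (Fin n) ℝ} {π : Fin n → ℝ} {κ σ : ℝ}

lemma l2_opNorm_VK_sub_VinfK_le (N : Seminorm ℝ (Fin n × Fin p → ℝ))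
    (hge : ∀ z, eucNorm z ≤ N z) (hκ : ∀ z, N z ≤ κ * eucNorm z) (hκ0 : 0 ≤ κ)
    (hRb : Rb ∈ Matrix.rowStochastic ℝ (Fin n)) (hπstat : Matrix.vecMul π Rb = π)
    (hπsum : ∑ i, π i = 1) {m : ℕ} (hm : 1 ≤ m) :
    ‖VK n p Rb m - VinfK n p π‖ ≤ κ * opNorm N (RK n p Rb - VinfK n p π) ^ m := by
  have hσ0 := pow_nonneg (opNorm_nonneg N (RK n p Rb - VinfK n p π)) m
  refine l2_opNorm_le_of_eucNorm_mulVec_le (mul_nonneg hκ0 hσ0) fun z => ?_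
  rw [← RK_sub_VinfK_pow hRb hπstat hπsum hm]
  calc eucNorm (_ *ᵥ z) ≤ N (_ *ᵥ z) := hge _
    _ ≤ opNorm N _ ^ m * N z := apply_pow_mulVec_le N hge hκ _ m z
    _ ≤ opNorm N _ ^ m * (κ * eucNorm z) := mul_le_mul_of_nonneg_left (hκ z) hσ0
    _ = _ := by ring

lemma abs_pow_apply_self_sub_le (hπpos : ∀ i, 0 < π i) (hπsum : ∑ i, π i = 1) (hκ1 : 1 ≤ κ)
    (hdecay : ∀ m, 1 ≤ m → ‖VK n p Rb m - VinfK n p π‖ ≤ κ * σ ^ m) (j : Fin p) (m : ℕ)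
    (i : Fin n) : |(Rb ^ m) i i - π i| ≤ κ * σ ^ m := by
  rcases Nat.eq_zero_or_pos m with rfl | hm
  · have hπ1 : π i ≤ 1 :=
      hπsum ▸ Finset.single_le_sum (fun l _ => (hπpos l).le) (Finset.mem_univ i)
    rw [pow_zero, pow_zero, mul_one, Matrix.one_apply_eq, abs_le]
    constructor <;> linarith [hπpos i]
  · rw [← VK_sub_VinfK_apply_self m i j]
    exact (abs_apply_le_l2_opNorm _ _ _).trans (hdecay m hm)

lemma tendsto_VK (hσ0 : 0 ≤ σ) (hσ1 : σ < 1)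
    (hdecay : ∀ m, 1 ≤ m → ‖VK n p Rb m - VinfK n p π‖ ≤ κ * σ ^ m) :
    Tendsto (VK n p Rb) atTop (𝓝 (VinfK n p π)) := by
  rw [tendsto_iff_norm_sub_tendsto_zero]
  refine squeeze_zero' (.of_forall fun m => norm_nonneg _)
    ((eventually_ge_atTop 1).mono hdecay) ?_
  simpa using (tendsto_pow_atTop_nhds_zero_of_lt_one hσ0 hσ1).const_mul κ

lemma tendsto_VtinvK (hπpos : ∀ i, 0 < π i) (hσ0 : 0 ≤ σ) (hσ1 : σ < 1)
    (hentry : ∀ m i, |(Rb ^ m) i i - π i| ≤ κ * σ ^ m) :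
    Tendsto (VtinvK n p Rb) atTop (𝓝 (DinvK n p π)) := by
  have hlim : ∀ i, Tendsto (fun m => (Rb ^ m) i i) atTop (𝓝 (π i)) := fun i => by
    rw [tendsto_iff_norm_sub_tendsto_zero]
    refine squeeze_zero_norm (fun m => by simpa using hentry m i) ?_
    simpa using (tendsto_pow_atTop_nhds_zero_of_lt_one hσ0 hσ1).const_mul κ
  exact (continuous_id.matrix_diagonal.tendsto _).comp
    (tendsto_pi_nhds.2 fun q => (hlim q.1).inv₀ (hπpos q.1).ne')

lemma inv_pow_apply_self_le_l2_opNorm_VtinvK (m : ℕ) (i : Fin n) (j : Fin p) :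
    ((Rb ^ m) i i)⁻¹ ≤ ‖VtinvK n p Rb m‖ := by
  simpa [VtinvK] using
    (le_abs_self _).trans (abs_apply_le_l2_opNorm (VtinvK n p Rb m) (i, j) (i, j))

lemma inv_le_l2_opNorm_DinvK (i : Fin n) (j : Fin p) : (π i)⁻¹ ≤ ‖DinvK n p π‖ := by
  simpa [DinvK] using (le_abs_self _).trans (abs_apply_le_l2_opNorm (DinvK n p π) (i, j) (i, j))

lemma abs_inv_sub_inv_le {a b c : ℝ} (ha : 0 < a) (hb : 0 < b) (hac : a⁻¹ ≤ c) (hbc : b⁻¹ ≤ c) :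
    |a⁻¹ - b⁻¹| ≤ c ^ 2 * |a - b| := by
  rw [inv_sub_inv ha.ne' hb.ne', abs_div, abs_mul, abs_of_pos ha, abs_of_pos hb, abs_sub_comm,
    div_eq_mul_inv, mul_inv, sq, mul_comm]
  exact mul_le_mul_of_nonneg_right
    (mul_le_mul hac hbc (inv_pos.2 hb).le ((inv_pos.2 ha).le.trans hac)) (abs_nonneg _)

lemma l2_opNorm_VtinvK_sub_le {vt : ℝ} (hκ0 : 0 ≤ κ) (hσ0 : 0 ≤ σ)
    (hdiag : ∀ m i, 0 < (Rb ^ m) i i) (hπpos : ∀ i, 0 < π i)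
    (hentry : ∀ m i, |(Rb ^ m) i i - π i| ≤ κ * σ ^ m)
    (hWvt : ∀ m i, ((Rb ^ m) i i)⁻¹ ≤ vt) (hπvt : ∀ i, (π i)⁻¹ ≤ vt) (m : ℕ) :
    ‖VtinvK n p Rb m - DinvK n p π‖ ≤
      κ * vt ^ 2 * σ ^ m := by
  rw [VtinvK, DinvK, Matrix.diagonal_sub, Matrix.l2_opNorm_diagonal]
  refine (pi_norm_le_iff_of_nonneg (by positivity)).2 fun q => ?_
  rw [Real.norm_eq_abs]
  calc _ ≤ vt ^ 2 * |(Rb ^ m) q.1 q.1 - π q.1| :=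
        abs_inv_sub_inv_le (hdiag m q.1) (hπpos q.1) (hWvt m q.1) (hπvt q.1)
    _ ≤ vt ^ 2 * (κ * σ ^ m) := by gcongr; exact hentry m q.1
    _ = _ := by ring

lemma frsd_weight_bounds {v vt : ℝ} (hRb : Rb ∈ Matrix.rowStochastic ℝ (Fin n))
    (hdiag : ∀ i, 0 < Rb i i) (hπpos : ∀ i, 0 < π i) (hπsum : ∑ i, π i = 1) (hκ1 : 1 ≤ κ)
    (hσ0 : 0 ≤ σ) (hσ1 : σ < 1)
    (hdecay : ∀ m, 1 ≤ m → ‖VK n p Rb m - VinfK n p π‖ ≤ κ * σ ^ m) (j : Fin p)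
    (hv : v = ⨆ m, specNorm (VK n p Rb m)) (hvt : vt = ⨆ m, specNorm (VtinvK n p Rb m)) :
    ‖VinfK n p π‖ ≤ v ∧ (∀ m, ‖VtinvK n p Rb m‖ ≤ vt) ∧
      ∀ m, ‖VtinvK n p Rb m - DinvK n p π‖ ≤ κ * vt ^ 2 * σ ^ m := by
  simp only [specNorm_eq_l2_opNorm] at hv hvt
  have hentry := abs_pow_apply_self_sub_le hπpos hπsum hκ1 hdecay j
  have hWlim := tendsto_VtinvK (p := p) hπpos hσ0 hσ1 hentry
  have hW : ∀ m, ‖VtinvK n p Rb m‖ ≤ vt := fun m => hvt ▸ le_ciSup hWlim.norm.bddAbove_range m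
  refine ⟨hv ▸ l2_opNorm_le_iSup_of_tendsto (tendsto_VK hσ0 hσ1 hdecay), hW,
    l2_opNorm_VtinvK_sub_le (by linarith) hσ0 (pow_apply_self_pos hRb hdiag) hπpos hentry
      (fun m i => (inv_pow_apply_self_le_l2_opNorm_VtinvK m i j).trans (hW m))
      (fun i => (inv_le_l2_opNorm_DinvK i j).trans (hvt ▸ l2_opNorm_le_iSup_of_tendsto hWlim))⟩

end Convergence

section Gradients

variable {ι : Type*} [Fintype ι] {p : ℕ}

lemma sum_gradient_eq_zero_of_isMin {f : ι → (Fin p → ℝ) → ℝ} {g : ι → (Fin p → ℝ) → Fin p → ℝ}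
    (hgrad : ∀ i, IsGradient (f i) (g i)) {xstar : Fin p → ℝ}
    (hmin : ∀ w, ∑ i, f i xstar ≤ ∑ i, f i w) : ∑ i, g i xstar = 0 := by
  have hF := HasFDerivAt.fun_sum (u := Finset.univ) fun i _ => hgrad i xstar
  have hzero := (IsLocalMin.hasFDerivAt_eq_zero (.of_forall hmin) hF)
  funext j
  simpa [Finset.sum_apply, Pi.single_apply] using congrArg (· (Pi.single j 1)) hzero

lemma nonneg_of_lipschitz [Nonempty ι] [DecidableEq ι] {G : (ι → ℝ) → ι → ℝ} {L : ℝ}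
    (hLip : ∀ x x', eucNorm (G x - G x') ≤ L * eucNorm (x - x')) : 0 ≤ L := by
  obtain ⟨q⟩ := ‹Nonempty ι›
  simpa [eucNorm_single] using (eucNorm_nonneg _).trans (hLip (Pi.single q 1) 0)

variable {n : ℕ} {g : Fin n → (Fin p → ℝ) → Fin p → ℝ} {L : ℝ}

lemma eucNorm_gradf_sub_le (hL : 0 ≤ L)
    (hLip : ∀ i x x', eucNorm (g i x - g i x') ≤ L * eucNorm (x - x'))
    (z z' : Fin n × Fin p → ℝ) : eucNorm (gradf g z - gradf g z') ≤ L * eucNorm (z - z') := by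
  rw [← eucNorm_blocks, ← eucNorm_blocks (z - z'), ← abs_of_nonneg hL, ← eucNorm_smul]
  refine eucNorm_mono fun i => ?_
  simp only [Pi.smul_apply, smul_eq_mul, abs_mul, abs_of_nonneg (eucNorm_nonneg _),
    abs_of_nonneg hL]
  exact hLip i (fun j => z (i, j)) (fun j => z' (i, j))

lemma VinfK_mul_DinvK_mulVec {π : Fin n → ℝ} (hπpos : ∀ i, 0 < π i)
    (G : Fin n × Fin p → ℝ) :
    (VinfK n p π * DinvK n p π) *ᵥ G =
      fun q => ∑ i, G (i, q.2) := by
  funext q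
  simp [Matrix.mulVec, dotProduct, VinfK, DinvK, Matrix.mul_diagonal, Fintype.sum_prod_type,
    Matrix.one_apply, (hπpos _).ne']

lemma eucNorm_VinfK_mul_DinvK_mulVec_gradf_le {π : Fin n → ℝ} (hπpos : ∀ i, 0 < π i)
    (hL : 0 ≤ L) (hLip : ∀ i x x', eucNorm (g i x - g i x') ≤ L * eucNorm (x - x'))
    {xstar : Fin p → ℝ} (hsum : ∑ i, g i xstar = 0) (z : Fin n × Fin p → ℝ) :
    eucNorm ((VinfK n p π * DinvK n p π) *ᵥ gradf g z) ≤
      n * L * eucNorm (z - starVec n p xstar) := by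
  have hs : (fun q : Fin n × Fin p => ∑ i, gradf g z (i, q.2)) =
      fun q => (∑ i, (g i (fun j => z (i, j)) - g i xstar)) q.2 := by
    funext q
    simp [Finset.sum_sub_distrib, ← Finset.sum_apply, hsum, gradf]
  rw [VinfK_mul_DinvK_mulVec hπpos, hs, eucNorm_comp_snd, Fintype.card_fin]
  calc √(n : ℝ) * eucNorm (∑ i, (g i (fun j => z (i, j)) - g i xstar))
      ≤ √(n : ℝ) * ∑ i, L * eucNorm (fun j => (z - starVec n p xstar) (i, j)) := by
        gcongr
        exact (eucNorm_sum_le _ _).trans (Finset.sum_le_sum fun i _ => hLip i _ _)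
    _ ≤ √(n : ℝ) * (L * (√(n : ℝ) * eucNorm (z - starVec n p xstar))) := by
        rw [← Finset.mul_sum, ← eucNorm_blocks (z - starVec n p xstar)]
        gcongr
        simpa using
          sum_le_sqrt_card_mul_eucNorm fun i => eucNorm fun j => (z - starVec n p xstar) (i, j)
    _ = n * L * eucNorm (z - starVec n p xstar) := by
        linear_combination L * eucNorm (z - starVec n p xstar) *
          Real.mul_self_sqrt (Nat.cast_nonneg (α := ℝ) n)

end Gradients

section Recursion

variable {ι : Type*} [Fintype ι] [DecidableEq ι] {R V D : Matrix ι ι ℝ} {W : ℕ → Matrix ι ι ℝ}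
  {G : ℕ → ι → ℝ} {α β : ℝ} {x y : ℕ → ι → ℝ}

lemma mulVec_dual_eq_zero (hVR : V * R = V) (hy0 : y 0 = 0)
    (hy : ∀ k, y (k + 1) = y k + β • ((1 - R) *ᵥ x (k + 1))) (k : ℕ) : V *ᵥ y k = 0 := by
  induction k with
  | zero => rw [hy0, Matrix.mulVec_zero]
  | succ k ih =>
    rw [hy, Matrix.mulVec_add, ih, Matrix.mulVec_smul, Matrix.mulVec_mulVec, Matrix.mul_sub,
      Matrix.mul_one, hVR, sub_self, Matrix.zero_mulVec, smul_zero, zero_add]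

lemma frsd_step_eq (hVR : V * R = V) (hRV : R * V = V)
    (hx : ∀ k, x (k + 1) = R *ᵥ x k - α • (y k + W k *ᵥ G k))
    (hy : ∀ k, y (k + 1) = y k + β • ((1 - R) *ᵥ x (k + 1))) {j : ℕ} (hVy : V *ᵥ y j = 0) :
    x (j + 1 + 1) - x (j + 1) =
      (R - V) *ᵥ (x (j + 1) - x j)
      - (α * β) • ((1 - R) *ᵥ (x (j + 1) - V *ᵥ x (j + 1)))
      - α • (((1 - V) * W j) *ᵥ (G (j + 1) - G j))
      - α • ((W (j + 1) - W j) *ᵥ G (j + 1))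
      - α • ((V * (W j - D)) *ᵥ G (j + 1))
      - α • ((V * D) *ᵥ G (j + 1)) := by
  have hVR' : ∀ z, V *ᵥ (R *ᵥ z) = V *ᵥ z := fun z => by rw [Matrix.mulVec_mulVec, hVR]
  have hRV' : ∀ z, R *ᵥ (V *ᵥ z) = V *ᵥ z := fun z => by rw [Matrix.mulVec_mulVec, hRV]
  rw [hx (j + 1), hy j, hx j]
  simp only [Matrix.mulVec_sub, Matrix.sub_mulVec, Matrix.mulVec_add, Matrix.mulVec_smul,
    ← Matrix.mulVec_mulVec, Matrix.one_mulVec, Matrix.mulVec_zero, hVR', hRV', hVy]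
  module

lemma frsd_step_le (N : Seminorm ℝ (ι → ℝ)) (NC : (ι → ℝ) → ℝ) {κ κ' σ v vt L c : ℝ}
    (hge : ∀ z, eucNorm z ≤ N z) (hκ : ∀ z, N z ≤ κ * eucNorm z) (hκ0 : 0 ≤ κ)
    (hκ' : ∀ z, N z ≤ κ' * NC z) (hα : 0 ≤ α) (hβ : 0 ≤ β) (hσ : 0 ≤ σ) (hσ1 : σ ≤ 1)
    (hVR : V * R = V) (hRV : R * V = V)
    (hx : ∀ k, x (k + 1) = R *ᵥ x k - α • (y k + W k *ᵥ G k))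
    (hy : ∀ k, y (k + 1) = y k + β • ((1 - R) *ᵥ x (k + 1))) {j : ℕ} (hVy : V *ᵥ y j = 0)
    (hRσ : ∀ z, N ((R - V) *ᵥ z) ≤ σ * N z) (hV : ‖V‖ ≤ v) (hW : ‖W j‖ ≤ vt)
    (hWD : ∀ m, ‖W m - D‖ ≤ κ * vt ^ 2 * σ ^ m)
    (hG : eucNorm (G (j + 1) - G j) ≤ L * eucNorm (x (j + 1) - x j)) (hL : 0 ≤ L)
    (hVDG : eucNorm ((V * D) *ᵥ G (j + 1)) ≤ c) :
    N (x (j + 1 + 1) - x (j + 1)) ≤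
      (σ + α * (1 + v) * κ * vt * L) * N (x (j + 1) - x j)
        + α * β * opNorm N (1 - R) * κ' * NC (x (j + 1) - V *ᵥ x (j + 1))
        + α * κ * c
        + α * κ ^ 2 * (2 + v) * vt ^ 2 * σ ^ j * eucNorm (G (j + 1)) := by
  have hαβ := mul_nonneg hα hβ
  have hvt : 0 ≤ vt := (norm_nonneg _).trans hW
  have hWD₀ : 0 ≤ κ * vt ^ 2 * σ ^ j := by positivity
  have hW' : ‖W (j + 1) - W j‖ ≤ 2 * (κ * vt ^ 2 * σ ^ j) := by
    have hσj : σ ^ (j + 1) ≤ σ ^ j := pow_le_pow_of_le_one hσ hσ1 j.le_succ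
    calc ‖W (j + 1) - W j‖ = ‖(W (j + 1) - D) - (W j - D)‖ := by rw [sub_sub_sub_cancel_right]
      _ ≤ κ * vt ^ 2 * σ ^ (j + 1) + κ * vt ^ 2 * σ ^ j :=
        (norm_sub_le _ _).trans (add_le_add (hWD _) (hWD _))
      _ ≤ 2 * (κ * vt ^ 2 * σ ^ j) := by
        nlinarith [mul_le_mul_of_nonneg_left hσj (mul_nonneg hκ0 (sq_nonneg vt))]
  have hIVW : ‖(1 - V) * W j‖ ≤ (1 + v) * vt :=
    (norm_mul_le _ _).trans (mul_le_mul ((norm_sub_le _ _).trans (add_le_add l2_opNorm_one_le hV))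
      hW (norm_nonneg _) (by linarith [(norm_nonneg V).trans hV]))
  have hVWD : ‖V * (W j - D)‖ ≤ v * (κ * vt ^ 2 * σ ^ j) :=
    (norm_mul_le _ _).trans (mul_le_mul hV (hWD j) (norm_nonneg _) ((norm_nonneg V).trans hV))
  have b1 := hRσ (x (j + 1) - x j)
  have b2 : N ((α * β) • ((1 - R) *ᵥ (x (j + 1) - V *ᵥ x (j + 1)))) ≤
      α * β * (opNorm N (1 - R) * (κ' * NC (x (j + 1) - V *ᵥ x (j + 1)))) := by
    rw [map_smul_eq_mul, Real.norm_of_nonneg hαβ]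
    exact mul_le_mul_of_nonneg_left ((apply_mulVec_le_opNorm_mul N hge hκ _ _).trans
      (mul_le_mul_of_nonneg_left (hκ' _) (opNorm_nonneg N _))) hαβ
  have b3 := apply_smul_mulVec_le N hκ hκ0 hα hIVW
    (hG.trans (mul_le_mul_of_nonneg_left (hge (x (j + 1) - x j)) hL))
  have b4 := apply_smul_mulVec_le N hκ hκ0 hα hW' le_rfl (z := G (j + 1))
  have b5 := apply_smul_mulVec_le N hκ hκ0 hα hVWD le_rfl (z := G (j + 1))
  have b6 := (apply_smul_le_mul_eucNorm N hκ hα _).trans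
    (mul_le_mul_of_nonneg_left hVDG (mul_nonneg hα hκ0))
  rw [frsd_step_eq hVR hRV hx hy hVy]
  refine (N.map_sub₆_le_add _ _ _ _ _ _).trans ?_
  linear_combination b1 + b2 + b3 + b4 + b5 + b6

end Recursion

theorem stmt15_general (n p : ℕ) (hn : 1 ≤ n) (hp : 1 ≤ p) (Rb : Matrix (Fin n) (Fin n) ℝ)
    (hnonneg : ∀ i j, 0 ≤ Rb i j) (hrow : ∀ i, ∑ j, Rb i j = 1)
    (hdiag : ∀ i, 0 < Rb i i)
    (π : Fin n → ℝ) (hπpos : ∀ i, 0 < π i) (hπsum : ∑ i, π i = 1)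
    (hπstat : Matrix.vecMul π Rb = π)
    (f : Fin n → (Fin p → ℝ) → ℝ) (g : Fin n → (Fin p → ℝ) → Fin p → ℝ)
    (L : ℝ)
    (hgrad : ∀ i, IsGradient (f i) (g i))
    (hLip : ∀ i x x', eucNorm (g i x - g i x') ≤ L * eucNorm (x - x'))
    (xstar : Fin p → ℝ)
    (hmin : ∀ w, ∑ i, f i xstar ≤ ∑ i, f i w)
    (NR NC : (Fin n × Fin p → ℝ) → ℝ)
    (hNRtri : ∀ z w, NR (z + w) ≤ NR z + NR w)
    (hNRhom : ∀ (a : ℝ) z, NR (a • z) = |a| * NR z)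
    (hNRge : ∀ z, eucNorm z ≤ NR z) (hNCge : ∀ z, eucNorm z ≤ NC z)
    (κ₁ κ₃ : ℝ) (hκ₃ : 0 < κ₃)
    (hκ₁R : ∀ z, NR z ≤ κ₁ * NC z)
    (hκ₃R : ∀ z, NR z ≤ κ₃ * eucNorm z)
    (v vt : ℝ) (hv : v = ⨆ k : ℕ, specNorm (VK n p Rb k))
    (hvt : vt = ⨆ k : ℕ, specNorm (VtinvK n p Rb k))
    (σR : ℝ) (hσRdef : σR = opNorm NR (RK n p Rb - VinfK n p π))
    (hσR0 : 0 < σR) (hσR1 : σR < 1)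
    (α β : ℝ) (hα0 : 0 < α) (hβ0 : 0 < β)
    (x y : ℕ → (Fin n × Fin p → ℝ)) (hy0 : y 0 = 0)
    (hxrec : ∀ k, x (k + 1) =
      (RK n p Rb).mulVec (x k) - α • (y k + (VtinvK n p Rb k).mulVec (gradf g (x k))))
    (hyrec : ∀ k, y (k + 1) = y k + β • ((1 - RK n p Rb).mulVec (x (k + 1))))
    :
    ∀ k : ℕ, 1 ≤ k →
      NR (x (k + 1) - x k) ≤
        (σR + α * (1 + v) * κ₃ * vt * L) * NR (x k - x (k - 1))
          + α * (β * κ₁ * opNorm NR ((1 : Matrix (Fin n × Fin p) (Fin n × Fin p) ℝ)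
                - RK n p Rb) + κ₃ * n * L)
              * NC (x k - (VinfK n p π).mulVec (x k))
          + α * κ₃ * n * L * eucNorm ((VinfK n p π).mulVec (x k) - starVec n p xstar)
          + α * κ₃ ^ 2 * (3 * v + 2) * vt ^ 2 * Real.sqrt n * σR ^ (k - 1)
              * eucNorm (gradf g (x k)) := by
  intro k hk
  obtain ⟨j, rfl⟩ := Nat.exists_eq_add_of_le' hk
  rw [Nat.add_sub_cancel]
  have : Nonempty (Fin n) := ⟨⟨0, hn⟩⟩
  have : Nonempty (Fin p) := ⟨⟨0, hp⟩⟩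
  let N : Seminorm ℝ (Fin n × Fin p → ℝ) :=
    Seminorm.of NR hNRtri fun a z => by rw [Real.norm_eq_abs]; exact hNRhom a z
  have hRb : Rb ∈ Matrix.rowStochastic ℝ (Fin n) :=
    Matrix.mem_rowStochastic_iff_sum.2 ⟨hnonneg, hrow⟩
  have hκ₃1 : 1 ≤ κ₃ := one_le_of_eucNorm_le_seminorm_le N hNRge hκ₃R
  have hL : 0 ≤ L := nonneg_of_lipschitz (hLip ⟨0, hn⟩)
  have hdecay : ∀ m, 1 ≤ m → ‖VK n p Rb m - VinfK n p π‖ ≤ κ₃ * σR ^ m := fun m hm =>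
    hσRdef ▸ l2_opNorm_VK_sub_VinfK_le N hNRge hκ₃R hκ₃.le hRb hπstat hπsum hm
  obtain ⟨hV, hW, hWD⟩ :=
    frsd_weight_bounds hRb hdiag hπpos hπsum hκ₃1 hσR0.le hσR1 hdecay ⟨0, hp⟩ hv hvt
  have hstep := frsd_step_le N NC hNRge hκ₃R hκ₃.le hκ₁R hα0.le hβ0.le hσR0.le hσR1.le
    (VinfK_mul_RK hπstat) (RK_mul_VinfK hRb) hxrec hyrec
    (mulVec_dual_eq_zero (VinfK_mul_RK hπstat) hy0 hyrec j)
    (fun z => hσRdef ▸ apply_mulVec_le_opNorm_mul N hNRge hκ₃R _ z) hV (hW j) hWD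
    (eucNorm_gradf_sub_le hL hLip _ _) hL
    (eucNorm_VinfK_mul_DinvK_mulVec_gradf_le hπpos hL hLip
      (sum_gradient_eq_zero_of_isMin hgrad hmin) _)
  rw [show ⇑N = NR from rfl] at hstep
  have hsplit : eucNorm (x (j + 1) - starVec n p xstar) ≤
      NC (x (j + 1) - VinfK n p π *ᵥ x (j + 1)) +
        eucNorm (VinfK n p π *ᵥ x (j + 1) - starVec n p xstar) := by
    rw [← sub_add_sub_cancel _ (VinfK n p π *ᵥ x (j + 1))]
    exact (eucNorm_add_le _ _).trans (add_le_add (hNCge _) le_rfl)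
  have hslack : 2 + v ≤ (3 * v + 2) * Real.sqrt n := by
    have := Real.one_le_sqrt.2 (Nat.one_le_cast.2 hn)
    nlinarith [(norm_nonneg _).trans hV]
  have hX : 0 ≤ α * κ₃ ^ 2 * vt ^ 2 * σR ^ j * eucNorm (gradf g (x (j + 1))) := by
    have := eucNorm_nonneg (gradf g (x (j + 1)))
    positivity
  linear_combination hstep + (α * κ₃ * n * L) * hsplit + mul_le_mul_of_nonneg_left hslack hX

/-- Lemma 8: for `k ≥ 1`,
`‖x(k+1)−x(k)‖_R ≤ (σ_R + α(1+v)κ₃ṽL)‖x(k)−x(k−1)‖_R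
  + α(βκ₁|||I−R|||_R + κ₃nL)‖x(k)−x̂(k)‖_C + ακ₃nL‖x̂(k)−x*_vec‖
  + ακ₃²(3v+2)ṽ²√n σ_R^{k−1} ‖∇f(x(k))‖`. -/
theorem stmt15 (n p : ℕ) (hn : 1 ≤ n) (hp : 1 ≤ p) (Rb : Matrix (Fin n) (Fin n) ℝ)
    (hnonneg : ∀ i j, 0 ≤ Rb i j) (hrow : ∀ i, ∑ j, Rb i j = 1)
    (hdiag : ∀ i, 0 < Rb i i)
    (hirr : ∀ i j, ∃ k : ℕ, 0 < (Rb ^ k) i j)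
    (π : Fin n → ℝ) (hπpos : ∀ i, 0 < π i) (hπsum : ∑ i, π i = 1)
    (hπstat : Matrix.vecMul π Rb = π)
    (f : Fin n → (Fin p → ℝ) → ℝ) (g : Fin n → (Fin p → ℝ) → Fin p → ℝ)
    (μ L : ℝ) (hμ : 0 < μ) (hμL : μ ≤ L)
    (hgrad : ∀ i, IsGradient (f i) (g i))
    (hLip : ∀ i x x', eucNorm (g i x - g i x') ≤ L * eucNorm (x - x'))
    (hsc : ∀ i x x',
      f i x + (∑ j, g i x j * (x' j - x j)) + μ / 2 * eucNorm (x' - x) ^ 2 ≤ f i x')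
    (xstar : Fin p → ℝ)
    (hmin : ∀ w, ∑ i, f i xstar ≤ ∑ i, f i w)
    (huniq : ∀ w, (∀ w', ∑ i, f i w ≤ ∑ i, f i w') → w = xstar)
    (NR NC : (Fin n × Fin p → ℝ) → ℝ)
    (hNRtri : ∀ z w, NR (z + w) ≤ NR z + NR w)
    (hNRhom : ∀ (a : ℝ) z, NR (a • z) = |a| * NR z)
    (hNRdef : ∀ z, NR z = 0 ↔ z = 0)
    (hNCtri : ∀ z w, NC (z + w) ≤ NC z + NC w)
    (hNChom : ∀ (a : ℝ) z, NC (a • z) = |a| * NC z)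
    (hNCdef : ∀ z, NC z = 0 ↔ z = 0)
    (hNRge : ∀ z, eucNorm z ≤ NR z) (hNCge : ∀ z, eucNorm z ≤ NC z)
    (κ₁ κ₂ κ₃ κ₄ : ℝ) (hκ₁ : 0 < κ₁) (hκ₂ : 0 < κ₂) (hκ₃ : 0 < κ₃) (hκ₄ : 0 < κ₄)
    (hκ₁R : ∀ z, NR z ≤ κ₁ * NC z) (hκ₂C : ∀ z, NC z ≤ κ₂ * NR z)
    (hκ₃R : ∀ z, NR z ≤ κ₃ * eucNorm z) (hκ₄C : ∀ z, NC z ≤ κ₄ * eucNorm z)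
    (v vt : ℝ) (hv : v = ⨆ k : ℕ, specNorm (VK n p Rb k))
    (hvt : vt = ⨆ k : ℕ, specNorm (VtinvK n p Rb k))
    (σR : ℝ) (hσRdef : σR = opNorm NR (RK n p Rb - VinfK n p π))
    (hσR0 : 0 < σR) (hσR1 : σR < 1)
    (α β : ℝ) (hα0 : 0 < α) (hβ0 : 0 < β) (hαβ : α * β < 1)
    (x y : ℕ → (Fin n × Fin p → ℝ)) (hy0 : y 0 = 0)
    (hxrec : ∀ k, x (k + 1) =
      (RK n p Rb).mulVec (x k) - α • (y k + (VtinvK n p Rb k).mulVec (gradf g (x k))))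
    (hyrec : ∀ k, y (k + 1) = y k + β • ((1 - RK n p Rb).mulVec (x (k + 1))))
    :
    ∀ k : ℕ, 1 ≤ k →
      NR (x (k + 1) - x k) ≤
        (σR + α * (1 + v) * κ₃ * vt * L) * NR (x k - x (k - 1))
          + α * (β * κ₁ * opNorm NR ((1 : Matrix (Fin n × Fin p) (Fin n × Fin p) ℝ)
                - RK n p Rb) + κ₃ * n * L)
              * NC (x k - (VinfK n p π).mulVec (x k))
          + α * κ₃ * n * L * eucNorm ((VinfK n p π).mulVec (x k) - starVec n p xstar)
          + α * κ₃ ^ 2 * (3 * v + 2) * vt ^ 2 * Real.sqrt n * σR ^ (k - 1)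
              * eucNorm (gradf g (x k)) :=
  stmt15_general n p hn hp Rb hnonneg hrow hdiag π hπpos hπsum hπstat f g L hgrad hLip xstar hmin NR
    NC hNRtri hNRhom hNRge hNCge κ₁ κ₃ hκ₃ hκ₁R hκ₃R v vt hv hvt σR hσRdef hσR0 hσR1 α β hα0 hβ0 x y
    hy0 hxrec hyrec
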